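/- For all natural numbers d, n and every natural number s, Ψ_d(s, n) ≤ Ψ_d(⌊(n·d)/2⌋, n); that is, the number of blocks with a given sum is maximized when the sum equals ⌊n·d/2⌋. -/

import Mathlib

/-!
Replacing every pixel `x` by `d - x` shows that `Psi d · n` is symmetric about `n * d / 2`.
It is also unimodal, by induction on `n`: conditioning on the first pixel gives
`Psi d (s + 1) (n + 1) - Psi d s (n + 1) = Psi d (s + 1) n - Psi d (s - d) n` (the last term
read as `0` when `s < d`), and the induction hypothesis in the form "`a ≤ b` and `a + b ≤ n * d`
imply `Psi d a n ≤ Psi d b n`" makes this nonnegative as long as `2 * s < (n + 1) * d`.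
Symmetry and unimodality put the maximum in the middle.
-/

/-- The sum of the pixel values of a block. -/
def blockSum {d n : ℕ} (v : Fin n → Fin (d + 1)) : ℕ := ∑ i, (v i : ℕ)

/-- `Psi d s n` is the number of blocks `v : Fin n → Fin (d+1)` with `blockSum v = s`. -/
def Psi (d s n : ℕ) : ℕ :=
  (Finset.univ.filter (fun v : Fin n → Fin (d + 1) => blockSum v = s)).card

open Finset

theorem Nat.apply_le_apply_of_symm_of_le_succ {α : Type*} [Preorder α] {f : ℕ → α} {N : ℕ}
    (hstep : ∀ s, 2 * s < N → f s ≤ f (s + 1)) (hsymm : ∀ s ≤ N, f (N - s) = f s)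
    {a b : ℕ} (hab : a ≤ b) (habN : a + b ≤ N) : f a ≤ f b := by
  have hmono : ∀ {a b : ℕ}, a ≤ b → 2 * b ≤ N + 1 → f a ≤ f b := by
    intro a b hab hb
    induction b, hab using Nat.le_induction with
    | base => exact le_rfl
    | succ b _ ih => exact (ih (by omega)).trans (hstep b (by omega))
  rcases le_or_gt (2 * b) (N + 1) with hb | hb
  · exact hmono hab hb
  · rw [← hsymm b (by omega)]
    exact hmono (by omega) (by omega)

section Blocks

variable {d n : ℕ}

theorem blockSum_le (v : Fin n → Fin (d + 1)) : blockSum v ≤ n * d :=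
  calc blockSum v ≤ ∑ _i : Fin n, d := sum_le_sum fun i _ => Fin.is_le (v i)
    _ = n * d := by simp

theorem blockSum_rev_add (v : Fin n → Fin (d + 1)) :
    blockSum (fun i => (v i).rev) + blockSum v = n * d := by
  rw [blockSum, blockSum, ← sum_add_distrib]
  calc ∑ i, (((v i).rev : ℕ) + v i) = ∑ _i : Fin n, d :=
        sum_congr rfl fun i _ => by have := Fin.is_le (v i); rw [Fin.val_rev]; omega
    _ = n * d := by simp

theorem blockSum_cons (a : Fin (d + 1)) (w : Fin n → Fin (d + 1)) :
    blockSum (Fin.cons a w : Fin (n + 1) → Fin (d + 1)) = a + blockSum w := by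
  simp [blockSum, Fin.sum_univ_succ]

theorem psi_eq_zero_of_lt {s : ℕ} (hs : n * d < s) : Psi d s n = 0 := by
  rw [Psi, card_eq_zero, filter_eq_empty_iff]
  intro v _ hv
  have := blockSum_le v
  omega

theorem psi_symm {s : ℕ} (hs : s ≤ n * d) : Psi d (n * d - s) n = Psi d s n := by
  refine card_equiv (Equiv.piCongrRight fun _ => Fin.revPerm) fun v => ?_
  have := blockSum_rev_add v
  simp only [mem_filter, mem_univ, true_and]
  change _ ↔ blockSum (fun i => (v i).rev) = _
  omega

theorem psi_succ (s : ℕ) :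
    Psi d s (n + 1) = ∑ a : Fin (d + 1), #{w : Fin n → Fin (d + 1) | a + blockSum w = s} := by
  have hcons : #{p : Fin (d + 1) × (Fin n → Fin (d + 1)) | p.1 + blockSum p.2 = s} =
      Psi d s (n + 1) :=
    card_equiv (Fin.consEquiv fun _ => Fin (d + 1)) fun ⟨a, w⟩ => by
      simp [Fin.consEquiv, blockSum_cons]
  rw [← hcons, card_filter, Fintype.sum_prod_type]
  simp only [card_filter]

theorem psi_succ_succ_add (s : ℕ) :
    Psi d (s + 1) (n + 1) + #{w : Fin n → Fin (d + 1) | d + blockSum w = s} =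
      Psi d s (n + 1) + Psi d (s + 1) n := by
  have hshift : ∑ i : Fin d, #{w : Fin n → Fin (d + 1) | (i.succ : ℕ) + blockSum w = s + 1} =
      ∑ i : Fin d, #{w : Fin n → Fin (d + 1) | (i.castSucc : ℕ) + blockSum w = s} :=
    sum_congr rfl fun i _ => by
      congr 1
      refine filter_congr fun w _ => ?_
      simp only [Fin.val_succ, Fin.val_castSucc]
      omega
  rw [psi_succ, psi_succ, Fin.sum_univ_succ, Fin.sum_univ_castSucc, hshift]
  simp only [Fin.val_zero, zero_add, Fin.val_last, Psi]
  ring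

theorem psi_le_psi_add_one {s : ℕ} (h : d ≤ s → Psi d (s - d) n ≤ Psi d (s + 1) n) :
    Psi d s (n + 1) ≤ Psi d (s + 1) (n + 1) := by
  have hlast : #{w : Fin n → Fin (d + 1) | d + blockSum w = s} ≤ Psi d (s + 1) n := by
    rcases lt_or_ge s d with hsd | hds
    · rw [card_eq_zero.2 (filter_eq_empty_iff.2 fun w _ => by omega)]
      exact Nat.zero_le _
    · refine le_trans (card_le_card (monotone_filter_right _ fun w _ hw => ?_)) (h hds)
      omega
  have := psi_succ_succ_add (d := d) (n := n) s
  omega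

theorem psi_le_psi_of_add_le {a b : ℕ} (hab : a ≤ b) (habN : a + b ≤ n * d) :
    Psi d a n ≤ Psi d b n := by
  induction n generalizing a b with
  | zero =>
    obtain ⟨rfl, rfl⟩ : a = 0 ∧ b = 0 := by simp at habN; omega
    exact le_rfl
  | succ n ih =>
    refine Nat.apply_le_apply_of_symm_of_le_succ (f := (Psi d · (n + 1)))
      (fun s (hs : 2 * s < (n + 1) * d) => ?_) (fun _ => psi_symm) hab habN
    rw [add_one_mul] at hs
    exact psi_le_psi_add_one fun _ => ih (by omega) (by omega)

end Blocks

theorem psi_le_psi_middle (d n s : ℕ) :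
    Psi d s n ≤ Psi d (n * d / 2) n := by
  rcases le_or_gt s (n * d) with hs | hs
  · rcases le_or_gt s (n * d / 2) with h | h
    · exact psi_le_psi_of_add_le h (by omega)
    · rw [← psi_symm hs]
      exact psi_le_psi_of_add_le (by omega) (by omega)
  · exact (psi_eq_zero_of_lt hs).trans_le (Nat.zero_le _)
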